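/- Fix n players with friend sets F_i ⊆ {1,…,n}\{i}, numbers Q_i ≥ 1, and real weights w_{ij} for j ∈ F_i satisfying Σ_{j∈F_i} |w_{ij}|/Q_i < 4 for every i, and real intercepts a_i. Define Γ_i(σ) = L(a_i + Σ_{j∈F_i} (w_{ij}/Q_i) σ_j) where L is the logistic function. Then the system σ_i = Γ_i(σ), i = 1,…,n, has a unique solution σ ∈ [0,1]^n. -/

import Mathlib

/-!
The logistic function is `1/4`-Lipschitz, since `L' = eᵗ/(1 + eᵗ)² ≤ 1/4`. Hence, in the sup
metric on `ℝⁿ`, the best-response map `Γ` is Lipschitz with constant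
`maxᵢ (∑ⱼ |wᵢⱼ|/Qᵢ)/4 < 1`, and the Banach fixed point theorem gives a unique fixed point. It
lies in `[0,1]ⁿ` automatically because `L` takes values there.
-/

noncomputable def logistic (t : ℝ) : ℝ := Real.exp t / (1 + Real.exp t)

open NNReal

lemma hasDerivAt_logistic (t : ℝ) :
    HasDerivAt logistic (Real.exp t / (1 + Real.exp t) ^ 2) t := by
  have h := (Real.hasDerivAt_exp t).div ((Real.hasDerivAt_exp t).const_add 1)
    (by positivity : 1 + Real.exp t ≠ 0)
  exact h.congr_deriv (by ring)

lemma logistic_mem_Icc (t : ℝ) : logistic t ∈ Set.Icc (0 : ℝ) 1 :=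
  ⟨by unfold logistic; positivity,
    (div_le_one (by positivity)).2 (by linarith [Real.exp_pos t])⟩

lemma lipschitzWith_logistic : LipschitzWith (1 / 4) logistic := by
  refine lipschitzWith_of_nnnorm_deriv_le (fun t => (hasDerivAt_logistic t).differentiableAt)
    fun t => ?_
  rw [← NNReal.coe_le_coe, coe_nnnorm, (hasDerivAt_logistic t).deriv, Real.norm_eq_abs,
    abs_of_nonneg (by positivity), div_le_iff₀ (by positivity)]
  push_cast
  -- AM-GM: `4 e ≤ (1 + e)²`
  nlinarith [sq_nonneg (1 - Real.exp t)]

lemma exists_lt_forall_le_of_forall_lt {ι α : Type*} [Finite ι] [LinearOrder α] [OrderBot α]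
    (f : ι → α) {a : α} (ha : ⊥ < a) (h : ∀ i, f i < a) : ∃ b < a, ∀ i, f i ≤ b := by
  have := Fintype.ofFinite ι
  exact ⟨Finset.univ.sup f, (Finset.sup_lt_iff ha).2 fun i _ => h i,
    fun i => Finset.le_sup (Finset.mem_univ i)⟩

lemma LipschitzWith.pi_of_forall {α ι : Type*} {β : ι → Type*} [PseudoMetricSpace α] [Fintype ι]
    [∀ i, PseudoMetricSpace (β i)] {K : ℝ≥0} {g : α → ∀ i, β i}
    (h : ∀ i, LipschitzWith K fun x => g x i) : LipschitzWith K g :=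
  LipschitzWith.of_dist_le_mul fun x y =>
    (dist_pi_le_iff (by positivity)).2 fun i => (h i).dist_le_mul x y

lemma abs_sum_mul_sub_sum_mul_le {ι : Type*} [Fintype ι] (s : Finset ι) (c σ τ : ι → ℝ) :
    |∑ j ∈ s, c j * σ j - ∑ j ∈ s, c j * τ j| ≤ (∑ j ∈ s, |c j|) * dist σ τ := by
  rw [← Finset.sum_sub_distrib, Finset.sum_mul]
  refine (Finset.abs_sum_le_sum_abs _ _).trans (Finset.sum_le_sum fun j _ => ?_)
  rw [← mul_sub, abs_mul, ← Real.dist_eq]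
  exact mul_le_mul_of_nonneg_left (dist_le_pi_dist σ τ j) (abs_nonneg _)

lemma lipschitzWith_comp_affine {ι : Type*} [Fintype ι] {f : ℝ → ℝ} {L K : ℝ≥0}
    (hf : LipschitzWith L f) (s : ι → Finset ι) (b : ι → ℝ) (c : ι → ι → ℝ)
    (hK : ∀ i, L * ∑ j ∈ s i, ‖c i j‖₊ ≤ K) :
    LipschitzWith K fun (σ : ι → ℝ) i => f (b i + ∑ j ∈ s i, c i j * σ j) := by
  refine LipschitzWith.pi_of_forall fun i => LipschitzWith.of_dist_le_mul fun σ τ => ?_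
  have hKi : L * ∑ j ∈ s i, |c i j| ≤ K := by
    simpa only [NNReal.coe_mul, NNReal.coe_sum, coe_nnnorm, Real.norm_eq_abs]
      using NNReal.coe_le_coe.2 (hK i)
  calc dist (f (b i + ∑ j ∈ s i, c i j * σ j)) (f (b i + ∑ j ∈ s i, c i j * τ j))
      ≤ L * |∑ j ∈ s i, c i j * σ j - ∑ j ∈ s i, c i j * τ j| := by
        simpa only [Real.dist_eq, add_sub_add_left_eq_sub] using
          hf.dist_le_mul (b i + ∑ j ∈ s i, c i j * σ j) (b i + ∑ j ∈ s i, c i j * τ j)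
    _ ≤ L * ((∑ j ∈ s i, |c i j|) * dist σ τ) := by
        gcongr; exact abs_sum_mul_sub_sum_mul_le _ _ _ _
    _ ≤ K * dist σ τ := by rw [← mul_assoc]; gcongr

theorem unique_BNE_general
    (n : ℕ) (F : Fin n → Finset (Fin n))
    (Q : Fin n → ℝ) (hQ : ∀ i, 1 ≤ Q i)
    (w : Fin n → Fin n → ℝ) (a : Fin n → ℝ)
    (hw : ∀ i, (∑ j ∈ F i, |w i j|) / Q i < 4) :
    ∃! σ : Fin n → ℝ, (∀ i, σ i ∈ Set.Icc (0 : ℝ) 1) ∧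
      ∀ i, σ i = logistic (a i + ∑ j ∈ F i, (w i j / Q i) * σ j) := by
  set Γ : (Fin n → ℝ) → Fin n → ℝ := fun σ i => logistic (a i + ∑ j ∈ F i, (w i j / Q i) * σ j)
  have hrow : ∀ i, (1 / 4) * ∑ j ∈ F i, ‖w i j / Q i‖₊ < 1 := fun i => by
    have hQi : 0 < Q i := one_pos.trans_le (hQ i)
    rw [← NNReal.coe_lt_coe]
    push_cast
    simp only [norm_div, Real.norm_eq_abs, abs_of_pos hQi, ← Finset.sum_div]
    linarith [hw i]
  obtain ⟨K, hK1, hK⟩ := exists_lt_forall_le_of_forall_lt _ zero_lt_one hrow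
  have hΓ : ContractingWith K Γ := ⟨hK1, lipschitzWith_comp_affine lipschitzWith_logistic F a _ hK⟩
  have hfix := hΓ.fixedPoint_isFixedPt
  refine ⟨ContractingWith.fixedPoint Γ hΓ,
    ⟨fun i => congrFun hfix i ▸ logistic_mem_Icc _, fun i => (congrFun hfix i).symm⟩,
    fun τ ⟨_, hτ⟩ => hΓ.fixedPoint_unique (funext fun i => (hτ i).symm)⟩

theorem unique_BNE
    (n : ℕ) (F : Fin n → Finset (Fin n)) (hF : ∀ i, i ∉ F i)
    (Q : Fin n → ℝ) (hQ : ∀ i, 1 ≤ Q i)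
    (w : Fin n → Fin n → ℝ) (a : Fin n → ℝ)
    (hw : ∀ i, (∑ j ∈ F i, |w i j|) / Q i < 4) :
    ∃! σ : Fin n → ℝ, (∀ i, σ i ∈ Set.Icc (0 : ℝ) 1) ∧
      ∀ i, σ i = logistic (a i + ∑ j ∈ F i, (w i j / Q i) * σ j) :=
  unique_BNE_general n F Q hQ w a hw
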